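/- arXiv:q-bio/0505055 — 5 statements merged into one kernel-verified Lean document; each statement's English description precedes it below -/
import Mathlib

section
/- Let q_α, q_β, q_γ be real numbers, K = q_α + q_β + q_γ, and let R be the matrix of K3ST form with parameters (−K, q_α, q_β, q_γ). Then H₂⁻¹ R H₂ is the diagonal matrix −2·diag(0, q_α + q_γ, q_β + q_γ, q_α + q_β). -/
/-!
The columns of `H₂` are the characters of the Klein four-group `ℤ/2 × ℤ/2`, and a K3ST matrix is
the matrix of convolution by a function on that group, so `H₂` diagonalises every K3ST matrix at
once, with eigenvalues the character sums `a ± b ± c ± d`. At the parameters `(-K, qα, qβ, qγ)`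
these sums are `0, -2(qα + qγ), -2(qβ + qγ), -2(qα + qβ)`.
-/

/-- A 4×4 real matrix of K3ST form with parameters `(a, b, c, d)`. -/
def K3ST (a b c d : ℝ) : Matrix (Fin 4) (Fin 4) ℝ :=
  !![a, b, c, d;
     b, a, d, c;
     c, d, a, b;
     d, c, b, a]

/-- The 4×4 Hadamard matrix `H₂`. -/
def H2 : Matrix (Fin 4) (Fin 4) ℝ :=
  !![1,  1,  1,  1;
     1, -1,  1, -1;
     1,  1, -1, -1;
     1, -1, -1,  1]

open Matrix

lemma H2_mul_self : H2 * H2 = (4 : ℝ) • (1 : Matrix (Fin 4) (Fin 4) ℝ) := by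
  ext i j
  fin_cases i <;> fin_cases j <;> simp [H2, mul_apply, Fin.sum_univ_four] <;> norm_num

lemma H2_inv : H2⁻¹ = (1 / 4 : ℝ) • H2 :=
  inv_eq_right_inv <| by rw [Matrix.mul_smul, H2_mul_self, smul_smul]; norm_num

lemma H2_inv_mul_H2 : H2⁻¹ * H2 = 1 := by
  rw [H2_inv, smul_mul, H2_mul_self, smul_smul]; norm_num

lemma K3ST_mul_H2 (a b c d : ℝ) :
    K3ST a b c d * H2 =
      H2 * diagonal ![a + b + c + d, a - b + c - d, a + b - c - d, a - b - c + d] := by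
  ext i j
  fin_cases i <;> fin_cases j <;> simp [K3ST, H2, mul_apply, Fin.sum_univ_four] <;> ring

lemma H2_inv_mul_K3ST_mul_H2 (a b c d : ℝ) :
    H2⁻¹ * K3ST a b c d * H2 =
      diagonal ![a + b + c + d, a - b + c - d, a + b - c - d, a - b - c + d] := by
  rw [mul_assoc, K3ST_mul_H2, ← mul_assoc, H2_inv_mul_H2, one_mul]

theorem stmt2 (qα qβ qγ : ℝ) :
    H2⁻¹ * K3ST (-(qα + qβ + qγ)) qα qβ qγ * H2 =
      (-2 : ℝ) • Matrix.diagonal ![0, qα + qγ, qβ + qγ, qα + qβ] := by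
  rw [H2_inv_mul_K3ST_mul_H2, ← diagonal_smul]
  congr 1
  ext i
  fin_cases i <;> simp <;> ring
end

section
/- Let q_α, q_β, q_γ be real numbers, K = q_α + q_β + q_γ, and let R be the matrix of K3ST form with parameters (−K, q_α, q_β, q_γ). Then the matrix exponential exp(R) is of K3ST form with parameters (p_ε, p_α, p_β, p_γ) where p_α = (1/4)(1 − e^{−2(q_α+q_γ)} + e^{−2(q_β+q_γ)} − e^{−2(q_α+q_β)}), p_β = (1/4)(1 + e^{−2(q_α+q_γ)} − e^{−2(q_β+q_γ)} − e^{−2(q_α+q_β)}), p_γ = (1/4)(1 − e^{−2(q_α+q_γ)} − e^{−2(q_β+q_γ)} + e^{−2(q_α+q_β)}), and p_ε = 1 − p_α − p_β − p_γ. In particular 1 − 2(p_α + p_γ) = e^{−2(q_α+q_γ)}, 1 − 2(p_β + p_γ) = e^{−2(q_β+q_γ)}, and 1 − 2(p_α + p_β) = e^{−2(q_α+q_β)}. -/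
open Matrix

def hadamard4 : Matrix (Fin 4) (Fin 4) ℝ :=
  !![1, 1, 1, 1;
     1, 1, -1, -1;
     1, -1, 1, -1;
     1, -1, -1, 1]

theorem hadamard4_mul_smul_self : hadamard4 * ((4⁻¹ : ℝ) • hadamard4) = 1 := by
  ext i j
  fin_cases i <;> fin_cases j <;>
    simp [hadamard4, mul_apply, Fin.sum_univ_four, one_apply] <;> norm_num

theorem inv_hadamard4 : hadamard4⁻¹ = (4⁻¹ : ℝ) • hadamard4 :=
  inv_eq_right_inv hadamard4_mul_smul_self

theorem isUnit_hadamard4 : IsUnit hadamard4 :=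
  (isUnit_iff_isUnit_det _).mpr (isUnit_det_of_right_inverse hadamard4_mul_smul_self)

def k3stEigenvalues (a b c d : ℝ) : Fin 4 → ℝ :=
  ![a + b + c + d, a + b - c - d, a - b + c - d, a - b - c + d]

noncomputable def k3stOfEigenvalues (x : Fin 4 → ℝ) : Matrix (Fin 4) (Fin 4) ℝ :=
  K3ST ((x 0 + x 1 + x 2 + x 3) / 4) ((x 0 + x 1 - x 2 - x 3) / 4)
    ((x 0 - x 1 + x 2 - x 3) / 4) ((x 0 - x 1 - x 2 + x 3) / 4)

theorem hadamard4_mul_diagonal_mul_inv (x : Fin 4 → ℝ) :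
    hadamard4 * diagonal x * hadamard4⁻¹ = k3stOfEigenvalues x := by
  rw [inv_hadamard4]
  ext i j
  fin_cases i <;> fin_cases j <;>
    simp [hadamard4, k3stOfEigenvalues, K3ST, mul_apply, vecMul, dotProduct, diagonal_apply,
      Fin.sum_univ_four] <;> ring

theorem k3stOfEigenvalues_k3stEigenvalues (a b c d : ℝ) :
    k3stOfEigenvalues (k3stEigenvalues a b c d) = K3ST a b c d := by
  simp only [k3stOfEigenvalues, k3stEigenvalues, cons_val]
  congr 1 <;> ring

theorem K3ST_eq_hadamard4_conj (a b c d : ℝ) :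
    K3ST a b c d = hadamard4 * diagonal (k3stEigenvalues a b c d) * hadamard4⁻¹ := by
  rw [hadamard4_mul_diagonal_mul_inv, k3stOfEigenvalues_k3stEigenvalues]

theorem exp_K3ST (a b c d : ℝ) :
    NormedSpace.exp (K3ST a b c d) = k3stOfEigenvalues (Real.exp ∘ k3stEigenvalues a b c d) := by
  rw [K3ST_eq_hadamard4_conj, exp_conj _ _ isUnit_hadamard4, exp_diagonal,
    hadamard4_mul_diagonal_mul_inv, Pi.exp_def, Real.exp_eq_exp_ℝ]
  rfl

theorem k3stEigenvalues_neg_sum (qα qβ qγ : ℝ) :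
    k3stEigenvalues (-(qα + qβ + qγ)) qα qβ qγ =
      ![0, -2 * (qβ + qγ), -2 * (qα + qγ), -2 * (qα + qβ)] := by
  unfold k3stEigenvalues
  ring_nf

theorem stmt3 (qα qβ qγ : ℝ) :
    let pα : ℝ := (1 / 4) * (1 - Real.exp (-2 * (qα + qγ)) + Real.exp (-2 * (qβ + qγ))
      - Real.exp (-2 * (qα + qβ)))
    let pβ : ℝ := (1 / 4) * (1 + Real.exp (-2 * (qα + qγ)) - Real.exp (-2 * (qβ + qγ))
      - Real.exp (-2 * (qα + qβ)))
    let pγ : ℝ := (1 / 4) * (1 - Real.exp (-2 * (qα + qγ)) - Real.exp (-2 * (qβ + qγ))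
      + Real.exp (-2 * (qα + qβ)))
    let pε : ℝ := 1 - pα - pβ - pγ
    NormedSpace.exp (K3ST (-(qα + qβ + qγ)) qα qβ qγ) = K3ST pε pα pβ pγ ∧
      1 - 2 * (pα + pγ) = Real.exp (-2 * (qα + qγ)) ∧
      1 - 2 * (pβ + pγ) = Real.exp (-2 * (qβ + qγ)) ∧
      1 - 2 * (pα + pβ) = Real.exp (-2 * (qα + qβ)) := by
  intro pα pβ pγ pε
  refine ⟨?_, by simp only [pα, pγ]; ring, by simp only [pβ, pγ]; ring,
    by simp only [pα, pβ]; ring⟩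
  rw [exp_K3ST, k3stEigenvalues_neg_sum, k3stOfEigenvalues]
  simp only [Function.comp_apply, cons_val, Real.exp_zero]
  congr 1 <;> simp only [pε, pα, pβ, pγ] <;> ring
end

section
/- Let W be a finite index set and for each e ∈ W let M_e be a 4×4 real matrix of K3ST form with parameters (a_e, b_e, c_e, d_e). Then the product M_W = ∏_{e∈W} M_e (well-defined since K3ST-form matrices commute) is again of K3ST form, with parameters (A,B,C,D) satisfying the four spectral identities: A+B+C+D = ∏_{e∈W}(a_e+b_e+c_e+d_e), A−B+C−D = ∏_{e∈W}(a_e−b_e+c_e−d_e), A+B−C−D = ∏_{e∈W}(a_e+b_e−c_e−d_e), and A−B−C+D = ∏_{e∈W}(a_e−b_e−c_e+d_e). -/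
lemma K3ST_mul (a b c d a' b' c' d' : ℝ) :
    K3ST a b c d * K3ST a' b' c' d' =
      K3ST (a * a' + b * b' + c * c' + d * d') (a * b' + b * a' + c * d' + d * c')
        (a * c' + b * d' + c * a' + d * b') (a * d' + b * c' + c * b' + d * a') := by
  ext i j
  fin_cases i <;> fin_cases j <;>
    simp [K3ST, Matrix.mul_apply, Fin.sum_univ_four] <;> ring

lemma K3ST_one_zero_zero_zero : K3ST 1 0 0 0 = 1 := by
  ext i j
  fin_cases i <;> fin_cases j <;> simp [K3ST]

/-- `K3ST a b c d` is the regular representation of `a + b x + c y + d xy` in the group algebra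
of the Klein four-group `{1, x, y, xy}`; these are its values at the four characters, hence
multiplicative. -/
def K3STEigenvalues (a b c d : ℝ) : Fin 4 → ℝ :=
  ![a + b + c + d, a - b + c - d, a + b - c - d, a - b - c + d]

lemma K3STEigenvalues_one_zero_zero_zero : K3STEigenvalues 1 0 0 0 = 1 := by
  ext i
  fin_cases i <;> simp [K3STEigenvalues]

lemma K3STEigenvalues_mul (a b c d a' b' c' d' : ℝ) :
    K3STEigenvalues (a * a' + b * b' + c * c' + d * d') (a * b' + b * a' + c * d' + d * c')
        (a * c' + b * d' + c * a' + d * b') (a * d' + b * c' + c * b' + d * a') =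
      K3STEigenvalues a b c d * K3STEigenvalues a' b' c' d' := by
  ext i
  fin_cases i <;> simp [K3STEigenvalues] <;> ring

theorem exists_noncommProd_eq_K3ST {ι : Type*} (W : Finset ι) (M : ι → Matrix (Fin 4) (Fin 4) ℝ)
    (a b c d : ι → ℝ) (hM : ∀ e ∈ W, M e = K3ST (a e) (b e) (c e) (d e))
    (hcomm : (W : Set ι).Pairwise fun e f => Commute (M e) (M f)) :
    ∃ A B C D : ℝ, W.noncommProd M hcomm = K3ST A B C D ∧
      K3STEigenvalues A B C D = ∏ e ∈ W, K3STEigenvalues (a e) (b e) (c e) (d e) := by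
  induction W using Finset.cons_induction with
  | empty => exact ⟨1, 0, 0, 0, K3ST_one_zero_zero_zero.symm, K3STEigenvalues_one_zero_zero_zero⟩
  | cons e s he ih =>
    obtain ⟨A, B, C, D, hprod, heig⟩ :=
      ih (fun f hf => hM f (Finset.mem_cons_of_mem hf))
        (hcomm.mono fun _ => Finset.mem_cons_of_mem)
    rw [Finset.noncommProd_cons, hprod, hM e (Finset.mem_cons_self e s), K3ST_mul]
    exact ⟨_, _, _, _, rfl, by rw [K3STEigenvalues_mul, heig, Finset.prod_cons]⟩

theorem stmt6 {ι : Type*} (W : Finset ι) (M : ι → Matrix (Fin 4) (Fin 4) ℝ)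
    (a b c d : ι → ℝ) (hM : ∀ e ∈ W, M e = K3ST (a e) (b e) (c e) (d e))
    (hcomm : (W : Set ι).Pairwise fun e f => Commute (M e) (M f)) :
    ∃ A B C D : ℝ,
      W.noncommProd M hcomm = K3ST A B C D ∧
      A + B + C + D = ∏ e ∈ W, (a e + b e + c e + d e) ∧
      A - B + C - D = ∏ e ∈ W, (a e - b e + c e - d e) ∧
      A + B - C - D = ∏ e ∈ W, (a e + b e - c e - d e) ∧
      A - B - C + D = ∏ e ∈ W, (a e - b e - c e + d e) := by
  obtain ⟨A, B, C, D, hprod, heig⟩ := exists_noncommProd_eq_K3ST W M a b c d hM hcomm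
  have eig (i : Fin 4) := by simpa only [Finset.prod_apply] using congrFun heig i
  exact ⟨A, B, C, D, hprod, eig 0, eig 1, eig 2, eig 3⟩
end

section
/- Let E be a finite family of distinct nonempty subsets of {1,…,n} with weights q_α, q_β, q_γ : E → ℝ, and let Q be the associated edge-length spectrum. Then for all C, D ⊆ {1,…,n}: (H_n Q H_n)_{C,D} = −2·( Σ_{S ∈ Π_C} q_α(S) + Σ_{S ∈ Π_D} q_β(S) + Σ_{S ∈ Π_C Δ Π_D} q_γ(S) ), where Π_C = {S ∈ E : |S∩C| odd}, Π_D = {S ∈ E : |S∩D| odd}, and Π_C Δ Π_D = {S ∈ E : |S∩C| + |S∩D| is odd}. -/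
/-!
Since `∅ ∉ E`, `Q` is the sum of the matrix units carrying the weights and of the unit at `(∅, ∅)`
carrying `-Σ (q_α + q_β + q_γ)`. Conjugating the unit at `(A, B)` by `H_n` gives the matrix with
`(C, D)`-entry `(-1)^{|A ∩ C|} (-1)^{|B ∩ D|}`, which is constant for `A = B = ∅`. Pairing each sign
`(-1)^k` with the matching `-1` from that constant gives `-2` or `0` according to the parity of `k`.
-/

/-- The `2ⁿ × 2ⁿ` Hadamard matrix indexed by subsets of `{1,…,n}`,
with entry `(A, B) ↦ (−1)^{|A ∩ B|}`. -/
def Hmat (n : ℕ) : Matrix (Finset (Fin n)) (Finset (Fin n)) ℝ :=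
  Matrix.of fun A B => (-1 : ℝ) ^ (A ∩ B).card

/-- The edge-length spectrum associated to a family `E` of subsets of `{1,…,n}`
with weights `qa, qb, qc` (for substitution types α, β, γ). -/
def Qspec {n : ℕ} (E : Finset (Finset (Fin n))) (qa qb qc : Finset (Fin n) → ℝ) :
    Matrix (Finset (Fin n)) (Finset (Fin n)) ℝ :=
  Matrix.of fun A B =>
    if A = ∅ ∧ B = ∅ then -∑ S ∈ E, (qa S + qb S + qc S)
    else if B = ∅ ∧ A ∈ E then qa A
    else if A = ∅ ∧ B ∈ E then qb B
    else if A = B ∧ A ∈ E then qc A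
    else 0

lemma Hmat_mul_single_mul_Hmat_apply {n : ℕ} (A B C D : Finset (Fin n)) (v : ℝ) :
    (Hmat n * Matrix.single A B v * Hmat n) C D =
      (-1 : ℝ) ^ (A ∩ C).card * v * (-1 : ℝ) ^ (B ∩ D).card := by
  simp [Matrix.mul_apply, Matrix.single, Hmat, ite_and, Finset.inter_comm C A]

lemma Qspec_eq_single_add_sum {n : ℕ} (E : Finset (Finset (Fin n))) (hE : ∅ ∉ E)
    (qa qb qc : Finset (Fin n) → ℝ) :
    Qspec E qa qb qc =
      Matrix.single ∅ ∅ (-∑ S ∈ E, (qa S + qb S + qc S)) +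
      ∑ S ∈ E, (Matrix.single S ∅ (qa S) + Matrix.single ∅ S (qb S) +
        Matrix.single S S (qc S)) := by
  ext A B
  simp only [Qspec, Matrix.of_apply, Matrix.add_apply, Matrix.sum_apply, Matrix.single_apply,
    Finset.sum_add_distrib]
  by_cases hA : A = ∅ <;> by_cases hB : B = ∅
  all_goals simp_all [eq_comm (a := (∅ : Finset (Fin n))), ite_and, Finset.sum_ite_eq']
  split_ifs <;> simp_all

lemma neg_one_pow_mul_sub_self (k : ℕ) (x : ℝ) :
    (-1 : ℝ) ^ k * x - x = -2 * if Odd k then x else 0 := by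
  rcases Nat.even_or_odd k with hk | hk
  · simp [hk.neg_one_pow, Nat.not_odd_iff_even.mpr hk]
  · simp [hk.neg_one_pow, hk]; ring

lemma signed_sum_sub_eq_neg_two_mul (a b : ℕ) (x y z : ℝ) :
    (-1 : ℝ) ^ a * x + y * (-1 : ℝ) ^ b + (-1 : ℝ) ^ a * z * (-1 : ℝ) ^ b - (x + y + z) =
      -2 * ((if Odd a then x else 0) + (if Odd b then y else 0) +
        (if Odd (a + b) then z else 0)) := by
  linear_combination neg_one_pow_mul_sub_self a x + neg_one_pow_mul_sub_self b y +
    neg_one_pow_mul_sub_self (a + b) z + (pow_add (-1 : ℝ) a b) * z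

theorem stmt12 {n : ℕ} (E : Finset (Finset (Fin n))) (hE : ∅ ∉ E)
    (qa qb qc : Finset (Fin n) → ℝ) (C D : Finset (Fin n)) :
    (Hmat n * Qspec E qa qb qc * Hmat n) C D =
      -2 * ((∑ S ∈ E.filter (fun S => Odd (S ∩ C).card), qa S) +
        (∑ S ∈ E.filter (fun S => Odd (S ∩ D).card), qb S) +
        (∑ S ∈ E.filter (fun S => Odd ((S ∩ C).card + (S ∩ D).card)), qc S)) := by
  rw [Qspec_eq_single_add_sum E hE]
  simp only [Matrix.mul_add, Matrix.add_mul, Matrix.mul_sum, Matrix.sum_mul, Matrix.add_apply,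
    Matrix.sum_apply, Hmat_mul_single_mul_Hmat_apply, Finset.empty_inter, Finset.card_empty,
    pow_zero, mul_one, one_mul]
  rw [Finset.sum_filter, Finset.sum_filter, Finset.sum_filter, ← Finset.sum_add_distrib,
    ← Finset.sum_add_distrib, Finset.mul_sum, neg_add_eq_sub, ← Finset.sum_sub_distrib]
  exact Finset.sum_congr rfl fun S _ => signed_sum_sub_eq_neg_two_mul _ _ _ _ _
end

section
/- Let G = ℤ₂ × ℤ₂ with elements labeled ε = (0,0), α = (1,0), β = (0,1), γ = (1,1), and let p_U, p_V, p_W : G → ℝ be arbitrary functions. For subsets X, Y ⊆ G define Pr[X;Y] = Σ over triples (θ,φ,ψ) ∈ G³ with θ+ψ ∈ X and φ+ψ ∈ Y of p_U(θ)·p_V(φ)·p_W(ψ). Then (p_U(ε)+p_U(α)−p_U(β)−p_U(γ)) · (p_V(ε)−p_V(α)+p_V(β)−p_V(γ)) · (p_W(ε)−p_W(α)−p_W(β)+p_W(γ)) = Pr[{ε,α};{ε,β}] + Pr[{β,γ};{α,γ}] − Pr[{ε,α};{α,γ}] − Pr[{β,γ};{ε,β}]. -/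
/-!
Writing `s_X = 𝟙_X - 𝟙_{Xᶜ}`, the right-hand side is `∑ pU θ pV φ pW ψ · s_X(θ+ψ) · s_Y(φ+ψ)`,
with `X = {ε, α}` and `Y = {ε, β}`. Both sign functions are characters of the Klein group:
`s_X(x, y) = (-1)^y` and `s_Y(x, y) = (-1)^x`. Splitting `s(θ+ψ) = s(θ) s(ψ)` makes the triple
sum factor into the product of the Fourier coefficients of `pU`, `pV`, `pW` at the characters
`s_X`, `s_Y` and `s_X s_Y`, which are the three factors on the left.
-/

/-- `kleinPr pU pV pW X Y` is the sum, over triples `(θ,φ,ψ)` of Klein-group elements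
with `θ+ψ ∈ X` and `φ+ψ ∈ Y`, of `pU θ * pV φ * pW ψ`. -/
def kleinPr (pU pV pW : ZMod 2 × ZMod 2 → ℝ) (X Y : Finset (ZMod 2 × ZMod 2)) : ℝ :=
  ∑ t ∈ (Finset.univ : Finset ((ZMod 2 × ZMod 2) × (ZMod 2 × ZMod 2) × (ZMod 2 × ZMod 2))).filter
      (fun t => t.1 + t.2.2 ∈ X ∧ t.2.1 + t.2.2 ∈ Y),
    pU t.1 * pV t.2.1 * pW t.2.2

open Finset

theorem AddChar.sum_mul_apply_add_mul_apply_add {G R : Type*} [AddCommGroup G] [Fintype G]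
    [CommRing R] (χ ξ : AddChar G R) (u v w : G → R) :
    ∑ t : G × G × G, u t.1 * v t.2.1 * w t.2.2 * (χ (t.1 + t.2.2) * ξ (t.2.1 + t.2.2)) =
      (∑ θ, u θ * χ θ) * (∑ φ, v φ * ξ φ) * ∑ ψ, w ψ * (χ * ξ) ψ := by
  rw [mul_assoc, sum_mul_sum, sum_mul_sum]
  simp only [mul_sum, ← Fintype.sum_prod_type']
  refine sum_congr rfl fun t _ => ?_
  rw [map_add_eq_mul, map_add_eq_mul, mul_apply]
  ring

def signIndicator {α : Type*} [DecidableEq α] (s : Finset α) (z : α) : ℝ :=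
  if z ∈ s then 1 else -1

theorem kleinPr_add_kleinPr_compl_sub_sub (pU pV pW : ZMod 2 × ZMod 2 → ℝ)
    (X Y : Finset (ZMod 2 × ZMod 2)) :
    kleinPr pU pV pW X Y + kleinPr pU pV pW Xᶜ Yᶜ - kleinPr pU pV pW X Yᶜ -
        kleinPr pU pV pW Xᶜ Y =
      ∑ t : (ZMod 2 × ZMod 2) × (ZMod 2 × ZMod 2) × (ZMod 2 × ZMod 2),
        pU t.1 * pV t.2.1 * pW t.2.2 *
          (signIndicator X (t.1 + t.2.2) * signIndicator Y (t.2.1 + t.2.2)) := by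
  simp only [kleinPr, sum_filter, ← sum_add_distrib, ← sum_sub_distrib]
  refine sum_congr rfl fun t _ => ?_
  by_cases hX : t.1 + t.2.2 ∈ X <;> by_cases hY : t.2.1 + t.2.2 ∈ Y <;>
    simp [signIndicator, hX, hY]

theorem ZMod.sum_univ_two {M : Type*} [AddCommMonoid M] (f : ZMod 2 → M) :
    ∑ a : ZMod 2, f a = f 0 + f 1 :=
  Fin.sum_univ_two f

noncomputable def signChar : AddChar (ZMod 2) ℝ :=
  AddChar.zmodChar 2 (ζ := -1) (by norm_num)

theorem signChar_one : signChar 1 = -1 := by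
  simp [signChar, AddChar.zmodChar_apply, ZMod.val_one]

theorem signChar_apply (a : ZMod 2) : signChar a = if a = 0 then 1 else -1 := by
  obtain rfl | rfl : a = 0 ∨ a = 1 := by revert a; decide
  · simp
  · simp [signChar_one]

theorem signIndicator_eq_signChar_snd :
    signIndicator ({(0, 0), (1, 0)} : Finset (ZMod 2 × ZMod 2)) =
      signChar.compAddMonoidHom (AddMonoidHom.snd _ _) := by
  funext z
  have hz : z ∈ ({(0, 0), (1, 0)} : Finset (ZMod 2 × ZMod 2)) ↔ z.2 = 0 := by revert z; decide
  simp [signIndicator, signChar_apply, hz]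

theorem signIndicator_eq_signChar_fst :
    signIndicator ({(0, 0), (0, 1)} : Finset (ZMod 2 × ZMod 2)) =
      signChar.compAddMonoidHom (AddMonoidHom.fst _ _) := by
  funext z
  have hz : z ∈ ({(0, 0), (0, 1)} : Finset (ZMod 2 × ZMod 2)) ↔ z.1 = 0 := by revert z; decide
  simp [signIndicator, signChar_apply, hz]

theorem stmt15 (pU pV pW : ZMod 2 × ZMod 2 → ℝ) :
    (pU (0, 0) + pU (1, 0) - pU (0, 1) - pU (1, 1)) *
      (pV (0, 0) - pV (1, 0) + pV (0, 1) - pV (1, 1)) *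
      (pW (0, 0) - pW (1, 0) - pW (0, 1) + pW (1, 1)) =
    kleinPr pU pV pW {(0, 0), (1, 0)} {(0, 0), (0, 1)} +
      kleinPr pU pV pW {(0, 1), (1, 1)} {(1, 0), (1, 1)} -
      kleinPr pU pV pW {(0, 0), (1, 0)} {(1, 0), (1, 1)} -
      kleinPr pU pV pW {(0, 1), (1, 1)} {(0, 0), (0, 1)} := by
  have hX : ({(0, 1), (1, 1)} : Finset (ZMod 2 × ZMod 2)) = {(0, 0), (1, 0)}ᶜ := by decide
  have hY : ({(1, 0), (1, 1)} : Finset (ZMod 2 × ZMod 2)) = {(0, 0), (0, 1)}ᶜ := by decide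
  rw [hX, hY, kleinPr_add_kleinPr_compl_sub_sub, signIndicator_eq_signChar_snd,
    signIndicator_eq_signChar_fst, AddChar.sum_mul_apply_add_mul_apply_add]
  simp only [AddChar.compAddMonoidHom_apply, AddMonoidHom.coe_fst, AddMonoidHom.coe_snd,
    AddChar.mul_apply, Fintype.sum_prod_type, ZMod.sum_univ_two, AddChar.map_zero_eq_one,
    signChar_one]
  ring
end
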